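/- Assume P is μ-strongly convex with μ > 0. Fix x ∈ ℝ^d and reals h_{ij} with |h_{ij}| ≤ γ (i ∈ [n], j ∈ [m]); write h_i = (h_{i1},…,h_{im}) ∈ ℝ^m. Set β = max_{i,j} (h_{ij}(x) + 2γ)/(h_{ij} + 2γ), H = (1/(nm)) Σ_{i,j} [ β (h_{ij} + 2γ) − 2γ ] a_{ij} a_{ij}ᵀ, and x⁺ = x − (H + λ I)^{-1} ∇P(x). Then ‖x⁺ − x*‖² ≤ (72 R⁴/μ²) ‖x − x*‖² Σ_{i=1}^n ‖h_i − h_i(x*)‖² + (72 ν² R⁶/μ²) ‖x − x*‖⁴. -/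

import Mathlib

/-!
Write `M = H + λI` and `M_{ij} = β (c_{ij} + 2γ) - 2γ`. The choice of `β` makes
`M_{ij} ≥ h_{ij}(x)`, so `M` dominates the Hessian `∇²P(x)`, which dominates `μ I` by strong
convexity; hence `M` is invertible and `μ ‖x⁺ - x*‖ ≤ ‖M (x⁺ - x*)‖`. Since `∇P(x*) = 0`,
`M (x⁺ - x*) = M (x - x*) - (∇P(x) - ∇P(x*))` is an average of the `a_{ij}` with coefficients
`(M_{ij} - h_{ij}(x*)) ⟨a_{ij}, x - x*⟩` minus second-order Taylor remainders of `φ'_{ij}`.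
For the pair `(k, l)` attaining `β`, the first factor is at most
`3 |c_{ij} - h_{ij}(x*)| + 3 |h_{kl}(x) - c_{kl}|`, hence `O(‖c - h(x*)‖ + ν R ‖x - x*‖)`, and
each remainder is at most `ν ⟨a_{ij}, x - x*⟩²`.
-/
open MeasureTheory Filter
open scoped BigOperators

noncomputable section

abbrev Euc (d : ℕ) := EuclideanSpace ℝ (Fin d)

/-- Real inner product on Euclidean space. -/
def rinner {d : ℕ} (a x : Euc d) : ℝ := inner ℝ a x

/-- The rank-one matrix `a aᵀ`. -/
def outerMat {d : ℕ} (a : Euc d) : Matrix (Fin d) (Fin d) ℝ := fun p q => a p * a q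

/-- `(1/(nm)) ∑_{ij} c_{ij} a_{ij} a_{ij}ᵀ`. -/
def Hmat {n m d : ℕ} (a : Fin n → Fin m → Euc d) (c : Fin n → Fin m → ℝ) :
    Matrix (Fin d) (Fin d) ℝ :=
  ((n : ℝ) * m)⁻¹ • ∑ i, ∑ j, c i j • outerMat (a i j)

/-- Matrix-vector multiplication as a map on Euclidean space. -/
def mulVecE {d : ℕ} (M : Matrix (Fin d) (Fin d) ℝ) (v : Euc d) : Euc d := WithLp.toLp 2 (M.mulVec v)

/-- The vector `h_i(y) = (φ''_{i1}(⟨a_{i1},y⟩), …, φ''_{im}(⟨a_{im},y⟩)) ∈ ℝ^m`. -/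
def hvecOf {n m d : ℕ} (a : Fin n → Fin m → Euc d) (φ'' : Fin n → Fin m → ℝ → ℝ)
    (i : Fin n) (y : Euc d) : Euc m :=
  WithLp.toLp 2 (fun j => φ'' i j (rinner (a i j) y))

/-- Componentwise positive part on ℝ^m. -/
def posPartE {m : ℕ} (v : Euc m) : Euc m := WithLp.toLp 2 (fun j => max (v j) 0)

open Topology

theorem abs_sub_sub_deriv_mul_le {g : ℝ → ℝ} {ν : ℝ} (hν : 0 ≤ ν) (hg : Differentiable ℝ g)
    (hlip : ∀ s t, |deriv g s - deriv g t| ≤ ν * |s - t|) (s t : ℝ) :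
    |g t - g s - deriv g s * (t - s)| ≤ ν * (t - s) ^ 2 := by
  have hderiv : ∀ u, HasDerivAt (fun u => g u - deriv g s * u) (deriv g u - deriv g s) u :=
    fun u => by simpa using (hg u).hasDerivAt.fun_sub ((hasDerivAt_id u).const_mul (deriv g s))
  have hbound : ∀ u ∈ Set.uIcc s t, ‖deriv g u - deriv g s‖ ≤ ν * |t - s| := fun u hu =>
    (hlip u s).trans (mul_le_mul_of_nonneg_left (Set.abs_sub_left_of_mem_uIcc hu) hν)
  have := (convex_uIcc s t).norm_image_sub_le_of_norm_hasDerivWithin_le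
    (fun u _ => (hderiv u).hasDerivWithinAt) hbound Set.left_mem_uIcc Set.right_mem_uIcc
  rw [Real.norm_eq_abs, Real.norm_eq_abs] at this
  calc |g t - g s - deriv g s * (t - s)| = |g t - deriv g s * t - (g s - deriv g s * s)| := by
        ring_nf
    _ ≤ ν * |t - s| * |t - s| := this
    _ = ν * (t - s) ^ 2 := by rw [mul_assoc, ← sq, sq_abs]

theorem le_of_forall_pos_le_add_mul {a b c : ℝ} (h : ∀ t > 0, a ≤ b + t * c) : a ≤ b := by
  have hlim : Tendsto (fun t : ℝ => b + t * c) (𝓝[>] 0) (𝓝 b) := by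
    have : Continuous (fun t : ℝ => b + t * c) := by fun_prop
    simpa using (this.tendsto 0).mono_left nhdsWithin_le_nhds
  exact ge_of_tendsto hlim (eventually_nhdsWithin_of_forall h)

theorem mul_le_of_abs_sub_mul_le {A B e ν : ℝ} (h : |A - B * e| ≤ ν * e ^ 2) :
    A * e ≤ B * e ^ 2 + ν * |e| ^ 3 := by
  calc A * e = B * e ^ 2 + (A - B * e) * e := by ring
    _ ≤ B * e ^ 2 + |A - B * e| * |e| := by rw [← abs_mul]; gcongr; exact le_abs_self _
    _ ≤ B * e ^ 2 + ν * e ^ 2 * |e| := by gcongr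
    _ = B * e ^ 2 + ν * |e| ^ 3 := by rw [← sq_abs e]; ring

theorem abs_div_mul_sub_le {γ c c' h h' : ℝ} (hγ : 0 < γ) (hc' : |c'| ≤ γ) (hh : |h| ≤ γ)
    (hh' : |h'| ≤ γ) :
    |(h' + 2 * γ) / (c' + 2 * γ) * (c + 2 * γ) - 2 * γ - h| ≤ 3 * |c - h| + 3 * |h' - c'| := by
  have hden : γ ≤ c' + 2 * γ := by linarith [neg_abs_le c']
  have hpos : 0 < c' + 2 * γ := hγ.trans_le hden
  have hnum : ∀ y, |y| ≤ γ → |y + 2 * γ| ≤ 3 * γ := fun y hy => by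
    rw [abs_le] at hy ⊢; constructor <;> linarith
  have key : (h' + 2 * γ) / (c' + 2 * γ) * (c + 2 * γ) - 2 * γ - h =
      ((h' + 2 * γ) * (c - h) + (h + 2 * γ) * (h' - c')) / (c' + 2 * γ) := by
    field_simp
    ring
  rw [key, abs_div, abs_of_pos hpos, div_le_iff₀ hpos]
  calc |(h' + 2 * γ) * (c - h) + (h + 2 * γ) * (h' - c')|
      ≤ |h' + 2 * γ| * |c - h| + |h + 2 * γ| * |h' - c'| := by
        rw [← abs_mul, ← abs_mul]; exact abs_add_le _ _
    _ ≤ 3 * γ * |c - h| + 3 * γ * |h' - c'| := by gcongr <;> exact hnum _ ‹_›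
    _ ≤ (3 * |c - h| + 3 * |h' - c'|) * (c' + 2 * γ) := by
        nlinarith [abs_nonneg (c - h), abs_nonneg (h' - c')]

theorem abs_mul_sub_le_of_taylor {κ h δ Δ E B ν : ℝ} (hν : 0 ≤ ν) (hκ : |κ - h| ≤ E)
    (hrem : |Δ - h * δ| ≤ ν * δ ^ 2) (hδ : |δ| ≤ B) : |κ * δ - Δ| ≤ (E + ν * B) * B := by
  have hE : 0 ≤ E := (abs_nonneg _).trans hκ
  calc |κ * δ - Δ| = |(κ - h) * δ - (Δ - h * δ)| := by ring_nf
    _ ≤ |κ - h| * |δ| + ν * |δ| ^ 2 := by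
        rw [← abs_mul, sq_abs]; exact (abs_sub _ _).trans (by gcongr)
    _ ≤ (E + ν * B) * B := by
        have : |δ| ^ 2 ≤ B ^ 2 := by gcongr
        nlinarith [abs_nonneg δ, abs_nonneg (κ - h)]

theorem le_mul_add_sub_of_div_le {γ c h β : ℝ} (hγ : 0 < γ) (hc : |c| ≤ γ)
    (hβ : (h + 2 * γ) / (c + 2 * γ) ≤ β) : h ≤ β * (c + 2 * γ) - 2 * γ := by
  have := (div_le_iff₀ (by linarith [neg_abs_le c])).mp hβ
  linarith

theorem sq_le_of_mul_le_sqrt_bound {μ N S ν R D : ℝ} (hμ : 0 < μ) (hN : 0 ≤ N) (hS : 0 ≤ S)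
    (h : μ * N ≤ (6 * √S + 4 * (ν * (R * D))) * (R * D) * R) :
    N ^ 2 ≤ 72 * R ^ 4 / μ ^ 2 * D ^ 2 * S + 72 * ν ^ 2 * R ^ 6 / μ ^ 2 * D ^ 4 := by
  have hK : ((6 * √S + 4 * (ν * (R * D))) * (R * D) * R) ^ 2 ≤
      72 * R ^ 4 * D ^ 2 * S + 72 * ν ^ 2 * R ^ 6 * D ^ 4 := by
    have hsq := add_sq_le (a := 6 * √S) (b := 4 * (ν * (R * D)))
    rw [mul_pow, mul_pow, Real.sq_sqrt hS] at hsq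
    have : 0 ≤ ν ^ 2 * R ^ 6 * D ^ 4 := by positivity
    calc _ = (6 * √S + 4 * (ν * (R * D))) ^ 2 * (R ^ 4 * D ^ 2) := by ring
      _ ≤ 2 * (6 ^ 2 * S + 4 ^ 2 * (ν * (R * D)) ^ 2) * (R ^ 4 * D ^ 2) := by gcongr
      _ ≤ _ := by linear_combination 40 * this
  calc N ^ 2 = (μ * N) ^ 2 / μ ^ 2 := by field_simp
    _ ≤ ((6 * √S + 4 * (ν * (R * D))) * (R * D) * R) ^ 2 / μ ^ 2 := by gcongr
    _ ≤ (72 * R ^ 4 * D ^ 2 * S + 72 * ν ^ 2 * R ^ 6 * D ^ 4) / μ ^ 2 := by gcongr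
    _ = _ := by ring

section InnerProductSpace
variable {E : Type*} [NormedAddCommGroup E] [InnerProductSpace ℝ E]

theorem strongMonotone_of_strongConvex {P : E → ℝ} {g : E → E} {μ : ℝ}
    (hsc : ∀ y z, P y + inner ℝ (g y) (z - y) + μ / 2 * ‖z - y‖ ^ 2 ≤ P z) (y z : E) :
    μ * ‖y - z‖ ^ 2 ≤ inner ℝ (g y - g z) (y - z) := by
  have h1 := hsc y z
  have h2 := hsc z y
  rw [← neg_sub y z, inner_neg_right, norm_neg] at h1
  rw [inner_sub_left]
  linarith

theorem mul_norm_le_norm_of_coercive {A : E → E} {μ : ℝ} {u : E}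
    (hA : μ * ‖u‖ ^ 2 ≤ inner ℝ (A u) u) : μ * ‖u‖ ≤ ‖A u‖ := by
  rcases (norm_nonneg u).eq_or_lt with hu | hu
  · rw [← hu, mul_zero]; exact norm_nonneg _
  · have := hA.trans (real_inner_le_norm (A u) u)
    nlinarith

end InnerProductSpace

theorem rinner_apply {d : ℕ} (a v : Euc d) : rinner a v = ∑ p, a p * v p := by
  simp only [rinner, PiLp.inner_apply, RCLike.inner_apply, conj_trivial, mul_comm]

theorem rinner_sub_right {d : ℕ} (a x y : Euc d) : rinner a (x - y) = rinner a x - rinner a y :=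
  inner_sub_right _ _ _

theorem abs_le_sqrt_sum_sum_sq {n m : ℕ} (f : Fin n → Fin m → ℝ) (i : Fin n) (j : Fin m) :
    |f i j| ≤ √(∑ i, ∑ j, f i j ^ 2) := by
  refine Real.abs_le_sqrt ?_
  calc f i j ^ 2 ≤ ∑ j, f i j ^ 2 :=
        Finset.single_le_sum (fun j _ => sq_nonneg (f i j)) (Finset.mem_univ j)
    _ ≤ ∑ i, ∑ j, f i j ^ 2 :=
        Finset.single_le_sum (f := fun i => ∑ j, f i j ^ 2)
          (fun i _ => Finset.sum_nonneg fun j _ => sq_nonneg (f i j)) (Finset.mem_univ i)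

def avgComb {n m d : ℕ} (a : Fin n → Fin m → Euc d) (r : Fin n → Fin m → ℝ) : Euc d :=
  ((n : ℝ) * m)⁻¹ • ∑ i, ∑ j, r i j • a i j

section Averages
variable {n m d : ℕ} (a : Fin n → Fin m → Euc d)

theorem avgComb_sub (r s : Fin n → Fin m → ℝ) :
    avgComb a r - avgComb a s = avgComb a (fun i j => r i j - s i j) := by
  simp only [avgComb, ← smul_sub, ← Finset.sum_sub_distrib, sub_smul]

theorem rinner_avgComb (r : Fin n → Fin m → ℝ) (v : Euc d) :
    rinner (avgComb a r) v = ((n : ℝ) * m)⁻¹ * ∑ i, ∑ j, r i j * rinner (a i j) v := by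
  simp only [avgComb, rinner, real_inner_smul_left, sum_inner]

theorem norm_avgComb_le {r : Fin n → Fin m → ℝ} {K : ℝ} (hK : 0 ≤ K)
    (hr : ∀ i j, |r i j| * ‖a i j‖ ≤ K) : ‖avgComb a r‖ ≤ K := by
  rcases Nat.eq_zero_or_pos (n * m) with hnm | hnm
  · simp [avgComb, ← Nat.cast_mul, hnm, hK]
  have hsum : ‖∑ i, ∑ j, r i j • a i j‖ ≤ ∑ _i : Fin n, ∑ _j : Fin m, K :=
    (norm_sum_le _ _).trans <| Finset.sum_le_sum fun i _ => (norm_sum_le _ _).trans <|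
      Finset.sum_le_sum fun j _ => by rw [norm_smul, Real.norm_eq_abs]; exact hr i j
  have hnm' : (0 : ℝ) < n * m := by exact_mod_cast hnm
  rw [avgComb, norm_smul, Real.norm_eq_abs, abs_of_pos (inv_pos.mpr hnm')]
  simp only [Finset.sum_const, Finset.card_univ, Fintype.card_fin, nsmul_eq_mul] at hsum
  rw [inv_mul_le_iff₀ hnm']
  linarith

theorem mulVecE_Hmat_add_smul_one (c : Fin n → Fin m → ℝ) (lam : ℝ) (v : Euc d) :
    mulVecE (Hmat a c + lam • 1) v = avgComb a (fun i j => c i j * rinner (a i j) v) + lam • v := by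
  ext p
  simp only [mulVecE, Hmat, avgComb, outerMat, rinner_apply, Matrix.mulVec, dotProduct,
    Matrix.add_apply, Matrix.smul_apply, Matrix.one_apply, Matrix.sum_apply, smul_eq_mul,
    PiLp.add_apply, PiLp.smul_apply, WithLp.ofLp_sum, Finset.sum_apply]
  simp only [add_mul, Finset.sum_add_distrib, ite_mul, mul_one, zero_mul, mul_ite, mul_zero,
    Finset.sum_ite_eq, Finset.mem_univ, if_true, Finset.mul_sum, Finset.sum_mul]
  congr 1
  rw [Finset.sum_comm]
  refine Finset.sum_congr rfl fun i _ => ?_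
  rw [Finset.sum_comm]
  refine Finset.sum_congr rfl fun j _ => Finset.sum_congr rfl fun q _ => ?_
  ring

end Averages

theorem rinner_mulVecE_Hmat_add_smul_one {n m d : ℕ} (a : Fin n → Fin m → Euc d)
    (c : Fin n → Fin m → ℝ) (lam : ℝ) (v : Euc d) :
    rinner (mulVecE (Hmat a c + lam • 1) v) v =
      ((n : ℝ) * m)⁻¹ * (∑ i, ∑ j, c i j * rinner (a i j) v ^ 2) + lam * ‖v‖ ^ 2 := by
  rw [mulVecE_Hmat_add_smul_one, rinner, inner_add_left, ← rinner, rinner_avgComb,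
    real_inner_smul_left, real_inner_self_eq_norm_sq]
  simp only [mul_assoc, sq]

theorem rinner_mulVecE_Hmat_mono {n m d : ℕ} (a : Fin n → Fin m → Euc d)
    {c c' : Fin n → Fin m → ℝ} (hc : ∀ i j, c i j ≤ c' i j) (lam : ℝ) (v : Euc d) :
    rinner (mulVecE (Hmat a c + lam • 1) v) v ≤ rinner (mulVecE (Hmat a c' + lam • 1) v) v := by
  simp only [rinner_mulVecE_Hmat_add_smul_one]
  gcongr with i _ j _
  exact hc i j

theorem mulVecE_sub {d : ℕ} (M : Matrix (Fin d) (Fin d) ℝ) (v w : Euc d) :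
    mulVecE M (v - w) = mulVecE M v - mulVecE M w := by
  ext p
  exact congrFun (Matrix.mulVec_sub M v w) p

theorem mulVecE_mulVecE_inv {d : ℕ} {M : Matrix (Fin d) (Fin d) ℝ} (hM : IsUnit M.det)
    (v : Euc d) : mulVecE M (mulVecE M⁻¹ v) = v := by
  ext p
  simp [mulVecE, Matrix.mulVec_mulVec, Matrix.mul_nonsing_inv M hM]

theorem isUnit_det_of_coercive {d : ℕ} {M : Matrix (Fin d) (Fin d) ℝ} {μ : ℝ} (hμ : 0 < μ)
    (hM : ∀ v, μ * ‖v‖ ^ 2 ≤ rinner (mulVecE M v) v) : IsUnit M.det := by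
  rw [isUnit_iff_ne_zero]
  intro hdet
  obtain ⟨v, hv, hMv⟩ := Matrix.exists_mulVec_eq_zero_iff.mpr hdet
  have h := mul_norm_le_norm_of_coercive (hM (WithLp.toLp 2 v))
  have hzero : mulVecE M (WithLp.toLp 2 v) = 0 := by rw [mulVecE, hMv]; rfl
  rw [hzero, norm_zero] at h
  exact hv (congrArg WithLp.ofLp
    (norm_eq_zero.mp (le_antisymm (nonpos_of_mul_nonpos_right h hμ) (norm_nonneg _))))

def gradMap {n m d : ℕ} (a : Fin n → Fin m → Euc d) (φ' : Fin n → Fin m → ℝ → ℝ) (lam : ℝ)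
    (y : Euc d) : Euc d :=
  avgComb a (fun i j => φ' i j (rinner (a i j) y)) + lam • y

theorem hasGradientAt_objective {n m d : ℕ} (a : Fin n → Fin m → Euc d) (φ : Fin n → Fin m → ℝ → ℝ)
    (hφ : ∀ i j, Differentiable ℝ (φ i j)) (lam : ℝ) (y : Euc d) :
    HasGradientAt
      (fun y => ((n : ℝ) * m)⁻¹ * (∑ i, ∑ j, φ i j (rinner (a i j) y)) + lam / 2 * ‖y‖ ^ 2)
      (gradMap a (fun i j => deriv (φ i j)) lam y) y := by
  have hterm : ∀ i j, HasFDerivAt (fun z => φ i j (rinner (a i j) z))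
      (deriv (φ i j) (rinner (a i j) y) • innerSL ℝ (a i j)) y := fun i j =>
    ((hφ i j) _).hasDerivAt.comp_hasFDerivAt y (innerSL ℝ (a i j)).hasFDerivAt
  have hsum := ((HasFDerivAt.fun_sum (u := Finset.univ) fun i _ =>
    HasFDerivAt.fun_sum (u := Finset.univ) fun j _ => hterm i j).const_mul ((n : ℝ) * m)⁻¹).add
    (((hasFDerivAt_id y).norm_sq).const_mul (lam / 2))
  rw [hasGradientAt_iff_hasFDerivAt]
  refine hsum.congr_fderiv (ContinuousLinearMap.ext fun v => ?_)
  simp [gradMap, avgComb, rinner, real_inner_comm]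
  ring

theorem gradient_eq_gradMap {n m d : ℕ} {a : Fin n → Fin m → Euc d} {φ : Fin n → Fin m → ℝ → ℝ}
    (hφ : ∀ i j, Differentiable ℝ (φ i j)) {lam : ℝ} {P : Euc d → ℝ}
    (hP : ∀ y, P y = ((n : ℝ) * m)⁻¹ * (∑ i, ∑ j, φ i j (rinner (a i j) y)) + lam / 2 * ‖y‖ ^ 2) :
    gradient P = gradMap a (fun i j => deriv (φ i j)) lam := by
  rw [funext hP]
  exact funext fun y => (hasGradientAt_objective a φ hφ lam y).gradient

section GradMap
variable {n m d : ℕ} (a : Fin n → Fin m → Euc d) (φ' : Fin n → Fin m → ℝ → ℝ) (lam : ℝ)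

theorem gradMap_sub (y z : Euc d) :
    gradMap a φ' lam y - gradMap a φ' lam z =
      avgComb a (fun i j => φ' i j (rinner (a i j) y) - φ' i j (rinner (a i j) z)) +
        lam • (y - z) := by
  rw [gradMap, gradMap, ← avgComb_sub, smul_sub]
  abel

theorem mulVecE_sub_gradMap_sub (c : Fin n → Fin m → ℝ) (y z : Euc d) :
    mulVecE (Hmat a c + lam • 1) (y - z) - (gradMap a φ' lam y - gradMap a φ' lam z) =
      avgComb a (fun i j => c i j * rinner (a i j) (y - z) -
        (φ' i j (rinner (a i j) y) - φ' i j (rinner (a i j) z))) := by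
  rw [mulVecE_Hmat_add_smul_one, gradMap_sub, add_sub_add_right_eq_sub, avgComb_sub]

/-- Compare `gradMap (x + t • v) - gradMap x` with `t • v` and let `t → 0⁺`. -/
theorem mul_norm_sq_le_rinner_hessian {φ'' : Fin n → Fin m → ℝ → ℝ} {ν μ : ℝ}
    (htaylor : ∀ i j s t, |φ' i j t - φ' i j s - φ'' i j s * (t - s)| ≤ ν * (t - s) ^ 2)
    (hmono : ∀ y z, μ * ‖y - z‖ ^ 2 ≤ rinner (gradMap a φ' lam y - gradMap a φ' lam z) (y - z))
    (x v : Euc d) :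
    μ * ‖v‖ ^ 2 ≤
      rinner (mulVecE (Hmat a (fun i j => φ'' i j (rinner (a i j) x)) + lam • 1) v) v := by
  rw [rinner_mulVecE_Hmat_add_smul_one]
  refine le_of_forall_pos_le_add_mul
    (c := ((n : ℝ) * m)⁻¹ * (ν * ∑ i, ∑ j, |rinner (a i j) v| ^ 3)) fun t ht => ?_
  have hterm : ∀ i j, (φ' i j (rinner (a i j) (x + t • v)) - φ' i j (rinner (a i j) x)) *
      rinner (a i j) (t • v) ≤ t ^ 2 * (φ'' i j (rinner (a i j) x) * rinner (a i j) v ^ 2 +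
        t * (ν * |rinner (a i j) v| ^ 3)) := by
    intro i j
    have hrem := htaylor i j (rinner (a i j) x) (rinner (a i j) (x + t • v))
    simp only [rinner, inner_add_right, real_inner_smul_right, add_sub_cancel_left] at hrem ⊢
    have := mul_le_of_abs_sub_mul_le hrem
    rw [abs_mul, abs_of_pos ht] at this
    linear_combination this
  have h := hmono (x + t • v) x
  rw [gradMap_sub, add_sub_cancel_left, rinner, inner_add_left, ← rinner, rinner_avgComb,
    real_inner_smul_left, real_inner_self_eq_norm_sq, norm_smul, Real.norm_eq_abs,
    abs_of_pos ht] at h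
  have hsum := Finset.sum_le_sum fun i (_ : i ∈ Finset.univ) =>
    Finset.sum_le_sum fun j (_ : j ∈ Finset.univ) => hterm i j
  simp only [← Finset.mul_sum, mul_add, Finset.sum_add_distrib] at hsum
  have hnm : (0 : ℝ) ≤ ((n : ℝ) * m)⁻¹ := by positivity
  refine le_of_mul_le_mul_left ?_ (by positivity : 0 < t ^ 2)
  linear_combination h + mul_le_mul_of_nonneg_left hsum hnm

end GradMap

section ErrorBound
variable {n m d : ℕ} {γ ν R : ℝ} {a : Fin n → Fin m → Euc d} {φ' φ'' : Fin n → Fin m → ℝ → ℝ}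
  {c : Fin n → Fin m → ℝ} {x xstar : Euc d}

theorem abs_rinner_sub_le (hR : ∀ i j, ‖a i j‖ ≤ R) (i : Fin n) (j : Fin m) :
    |rinner (a i j) (x - xstar)| ≤ R * ‖x - xstar‖ :=
  (abs_real_inner_le_norm _ _).trans (mul_le_mul_of_nonneg_right (hR i j) (norm_nonneg _))

theorem abs_newtonCoef_sub_le (hγ : 0 < γ) (hν : 0 ≤ ν) (hbdd : ∀ i j t, |φ'' i j t| ≤ γ)
    (hlip : ∀ i j s t, |φ'' i j s - φ'' i j t| ≤ ν * |s - t|) (hR : ∀ i j, ‖a i j‖ ≤ R)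
    {k : Fin n} {l : Fin m} (hc : |c k l| ≤ γ) (i : Fin n) (j : Fin m) :
    |(φ'' k l (rinner (a k l) x) + 2 * γ) / (c k l + 2 * γ) * (c i j + 2 * γ) - 2 * γ -
        φ'' i j (rinner (a i j) xstar)| ≤
      6 * √(∑ i, ∑ j, (c i j - φ'' i j (rinner (a i j) xstar)) ^ 2) +
        3 * (ν * (R * ‖x - xstar‖)) := by
  have hε := abs_le_sqrt_sum_sum_sq (fun i j => c i j - φ'' i j (rinner (a i j) xstar))
  have hlip_kl : |φ'' k l (rinner (a k l) x) - φ'' k l (rinner (a k l) xstar)| ≤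
      ν * (R * ‖x - xstar‖) := by
    refine (hlip k l _ _).trans (mul_le_mul_of_nonneg_left ?_ hν)
    rw [← rinner_sub_right]
    exact abs_rinner_sub_le hR k l
  have hkl : |φ'' k l (rinner (a k l) x) - c k l| ≤
      |φ'' k l (rinner (a k l) x) - φ'' k l (rinner (a k l) xstar)| +
        |c k l - φ'' k l (rinner (a k l) xstar)| := by
    rw [abs_sub_comm (c k l)]; exact abs_sub_le _ _ _
  have := abs_div_mul_sub_le (c := c i j) hγ hc (hbdd i j (rinner (a i j) xstar))
    (hbdd k l (rinner (a k l) x))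
  linarith [hε i j, hε k l]

theorem abs_residual_mul_norm_le (hγ : 0 < γ) (hν : 0 ≤ ν) (hbdd : ∀ i j t, |φ'' i j t| ≤ γ)
    (hlip : ∀ i j s t, |φ'' i j s - φ'' i j t| ≤ ν * |s - t|) (hR : ∀ i j, ‖a i j‖ ≤ R)
    (htaylor : ∀ i j s t, |φ' i j t - φ' i j s - φ'' i j s * (t - s)| ≤ ν * (t - s) ^ 2)
    {k : Fin n} {l : Fin m} (hc : |c k l| ≤ γ) (i : Fin n) (j : Fin m) :
    |((φ'' k l (rinner (a k l) x) + 2 * γ) / (c k l + 2 * γ) * (c i j + 2 * γ) - 2 * γ) *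
        rinner (a i j) (x - xstar) - (φ' i j (rinner (a i j) x) - φ' i j (rinner (a i j) xstar))| *
        ‖a i j‖ ≤
      (6 * √(∑ i, ∑ j, (c i j - φ'' i j (rinner (a i j) xstar)) ^ 2) +
        4 * (ν * (R * ‖x - xstar‖))) * (R * ‖x - xstar‖) * R := by
  have hrem := htaylor i j (rinner (a i j) xstar) (rinner (a i j) x)
  rw [← rinner_sub_right] at hrem
  have := abs_mul_sub_le_of_taylor hν (abs_newtonCoef_sub_le (x := x) hγ hν hbdd hlip hR hc i j)
    hrem (abs_rinner_sub_le hR i j)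
  calc _ ≤ (6 * √(∑ i, ∑ j, (c i j - φ'' i j (rinner (a i j) xstar)) ^ 2) +
          4 * (ν * (R * ‖x - xstar‖))) * (R * ‖x - xstar‖) * ‖a i j‖ := by
        gcongr; linear_combination this
    _ ≤ _ := by
        have : 0 ≤ R := (norm_nonneg _).trans (hR i j)
        gcongr; exact hR i j

end ErrorBound

theorem nl2_iterate_bound_general
    {n m d : ℕ}
    (ν γ lam R μ : ℝ) (hν : 0 ≤ ν) (hγ : 0 < γ) (hμ : 0 < μ)
    (a : Fin n → Fin m → Euc d) (φ : Fin n → Fin m → ℝ → ℝ)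
    (φ'' : Fin n → Fin m → ℝ → ℝ) (hφ'' : ∀ i j, φ'' i j = deriv (deriv (φ i j)))
    (hsmooth : ∀ i j, ContDiff ℝ 2 (φ i j))
    (hbdd : ∀ i j t, |φ'' i j t| ≤ γ)
    (hlip : ∀ i j s t, |φ'' i j s - φ'' i j t| ≤ ν * |s - t|)
    (hRub : ∀ i j, ‖a i j‖ ≤ R)
    (P : Euc d → ℝ)
    (hP : ∀ y, P y = ((n : ℝ) * m)⁻¹ * (∑ i, ∑ j, φ i j (rinner (a i j) y))
        + lam / 2 * ‖y‖ ^ 2)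
    (hsc : ∀ y z : Euc d,
        P y + rinner (gradient P y) (z - y) + μ / 2 * ‖z - y‖ ^ 2 ≤ P z)
    (xstar : Euc d) (hmin : ∀ y, P xstar ≤ P y)
    (x : Euc d) (c : Fin n → Fin m → ℝ) (hcγ : ∀ i j, |c i j| ≤ γ)
    (β : ℝ)
    (hβub : ∀ i j, (φ'' i j (rinner (a i j) x) + 2 * γ) / (c i j + 2 * γ) ≤ β)
    (hβmem : ∃ i j, β = (φ'' i j (rinner (a i j) x) + 2 * γ) / (c i j + 2 * γ))
    (xplus : Euc d)
    (hstep : xplus = x - mulVecE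
        (Hmat a (fun i j => β * (c i j + 2 * γ) - 2 * γ) +
          lam • (1 : Matrix (Fin d) (Fin d) ℝ))⁻¹ (gradient P x)) :
    ‖xplus - xstar‖ ^ 2 ≤
      72 * R ^ 4 / μ ^ 2 * ‖x - xstar‖ ^ 2 *
        (∑ i, ∑ j, (c i j - φ'' i j (rinner (a i j) xstar)) ^ 2) +
      72 * ν ^ 2 * R ^ 6 / μ ^ 2 * ‖x - xstar‖ ^ 4 := by
  have hgrad := gradient_eq_gradMap (fun i j => (hsmooth i j).differentiable (by norm_num)) hP
  have hGstar : gradMap a (fun i j => deriv (φ i j)) lam xstar = 0 := by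
    rw [← hgrad, gradient, IsLocalMin.fderiv_eq_zero (Eventually.of_forall hmin), map_zero]
  have htaylor : ∀ i j s t, |deriv (φ i j) t - deriv (φ i j) s - φ'' i j s * (t - s)| ≤
      ν * (t - s) ^ 2 := fun i j => by
    rw [hφ'' i j]
    exact abs_sub_sub_deriv_mul_le hν (hsmooth i j).differentiable_deriv_two (hφ'' i j ▸ hlip i j)
  set M := Hmat a (fun i j => β * (c i j + 2 * γ) - 2 * γ) + lam • (1 : Matrix (Fin d) (Fin d) ℝ)
  have hcoercive : ∀ v, μ * ‖v‖ ^ 2 ≤ rinner (mulVecE M v) v := fun v =>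
    (mul_norm_sq_le_rinner_hessian a _ lam htaylor
      (strongMonotone_of_strongConvex (hgrad ▸ hsc)) x v).trans
      (rinner_mulVecE_Hmat_mono a
        (fun i j => le_mul_add_sub_of_div_le hγ (hcγ i j) (hβub i j)) lam v)
  have hresidual : mulVecE M (xplus - xstar) = avgComb a (fun i j =>
      (β * (c i j + 2 * γ) - 2 * γ) * rinner (a i j) (x - xstar) -
        (deriv (φ i j) (rinner (a i j) x) - deriv (φ i j) (rinner (a i j) xstar))) := by
    rw [← mulVecE_sub_gradMap_sub, hGstar, sub_zero, hstep, hgrad, sub_right_comm, mulVecE_sub,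
      mulVecE_mulVecE_inv (isUnit_det_of_coercive hμ hcoercive)]
  obtain ⟨k, l, rfl⟩ := hβmem
  refine sq_le_of_mul_le_sqrt_bound hμ (norm_nonneg _) (by positivity) <|
    (mul_norm_le_norm_of_coercive (hcoercive _)).trans ?_
  rw [hresidual]
  exact norm_avgComb_le a (by have := (norm_nonneg _).trans (hRub k l); positivity)
    (abs_residual_mul_norm_le hγ hν hbdd hlip hRub htaylor (hcγ k l))

/-- one NL2-type Newton step under μ-strong convexity. -/
theorem nl2_iterate_bound
    {n m d : ℕ} (hn : 0 < n) (hm : 0 < m) (hd : 0 < d)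
    (ν γ lam R μ : ℝ) (hν : 0 ≤ ν) (hγ : 0 < γ) (hlam : 0 ≤ lam) (hμ : 0 < μ)
    (a : Fin n → Fin m → Euc d) (φ : Fin n → Fin m → ℝ → ℝ)
    (φ'' : Fin n → Fin m → ℝ → ℝ) (hφ'' : ∀ i j, φ'' i j = deriv (deriv (φ i j)))
    (hsmooth : ∀ i j, ContDiff ℝ 2 (φ i j))
    (hbdd : ∀ i j t, |φ'' i j t| ≤ γ)
    (hlip : ∀ i j s t, |φ'' i j s - φ'' i j t| ≤ ν * |s - t|)
    (hRub : ∀ i j, ‖a i j‖ ≤ R) (hRmem : ∃ i j, R = ‖a i j‖)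
    (P : Euc d → ℝ)
    (hP : ∀ y, P y = ((n : ℝ) * m)⁻¹ * (∑ i, ∑ j, φ i j (rinner (a i j) y))
        + lam / 2 * ‖y‖ ^ 2)
    (hsc : ∀ y z : Euc d,
        P y + rinner (gradient P y) (z - y) + μ / 2 * ‖z - y‖ ^ 2 ≤ P z)
    (xstar : Euc d) (hmin : ∀ y, P xstar ≤ P y)
    (x : Euc d) (c : Fin n → Fin m → ℝ) (hcγ : ∀ i j, |c i j| ≤ γ)
    (β : ℝ)
    (hβub : ∀ i j, (φ'' i j (rinner (a i j) x) + 2 * γ) / (c i j + 2 * γ) ≤ β)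
    (hβmem : ∃ i j, β = (φ'' i j (rinner (a i j) x) + 2 * γ) / (c i j + 2 * γ))
    (xplus : Euc d)
    (hstep : xplus = x - mulVecE
        (Hmat a (fun i j => β * (c i j + 2 * γ) - 2 * γ) +
          lam • (1 : Matrix (Fin d) (Fin d) ℝ))⁻¹ (gradient P x)) :
    ‖xplus - xstar‖ ^ 2 ≤
      72 * R ^ 4 / μ ^ 2 * ‖x - xstar‖ ^ 2 *
        (∑ i, ∑ j, (c i j - φ'' i j (rinner (a i j) xstar)) ^ 2) +
      72 * ν ^ 2 * R ^ 6 / μ ^ 2 * ‖x - xstar‖ ^ 4 :=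
  nl2_iterate_bound_general ν γ lam R μ hν hγ hμ a φ φ'' hφ'' hsmooth hbdd hlip hRub P hP hsc xstar
    hmin x c hcγ β hβub hβmem xplus hstep
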